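/- Let C be a Λ-MT code with block lengths (m_1,…,m_ℓ), where Λ = (λ_1,…,λ_ℓ), and set Δ = (λ_1^{−1},…,λ_ℓ^{−1}). Let L : F_q^n → F_q^n be the permutation that reverses the coordinates within each block. Then L(C) = {L(c) : c ∈ C} is a Δ-MT code with block lengths (m_1,…,m_ℓ), and B^T is a GPM of L(C), where H is a GPM of the Euclidean dual C^⊥ and B is the polynomial matrix satisfying the identical equation B·H = diag(x^{m_1}−λ_1^{−1},…,x^{m_ℓ}−λ_ℓ^{−1}). -/

import Mathlib

open Polynomial Matrix

/-- constacyclic shift with constant `lam` on one block of length `m`: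
`(a₀, …, a_{m-1}) ↦ (lam * a_{m-1}, a₀, …, a_{m-2})`. -/
def blockShift {F : Type*} [Field F] (lam : F) {m : ℕ} (a : Fin m → F) : Fin m → F :=
  fun j => if j.val = 0 then lam * a ⟨m - 1, by have := j.isLt; omega⟩
           else a ⟨j.val - 1, by have := j.isLt; omega⟩

/-- `CC ⊆ ⊕ᵢ F^{m i}` is a Λ-multi-twisted code: it is invariant under the blockwise
constacyclic shift `T_Λ`. -/
def IsMT {F : Type*} [Field F] {ℓ : ℕ} (lam : Fin ℓ → F) {m : Fin ℓ → ℕ}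
    (CC : Submodule F (∀ i, Fin (m i) → F)) : Prop :=
  ∀ v ∈ CC, (fun i => blockShift (lam i) (v i)) ∈ CC

/-- from a polynomial vector in `(F[x])^ℓ` to a blocked vector: reduce component `i`
modulo `x^{m i} - λᵢ` and take the coefficients. -/
noncomputable def toCode {F : Type*} [Field F] {ℓ : ℕ} (lam : Fin ℓ → F) (m : Fin ℓ → ℕ)
    (q : Fin ℓ → Polynomial F) : ∀ i, Fin (m i) → F :=
  fun i j => ((q i) %ₘ (X ^ (m i) - Polynomial.C (lam i))).coeff j

/-- `G` is a generator polynomial matrix (GPM) of the Λ-MT code `CC`: its rows form a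
minimal generating set (equivalently, since the corresponding submodule of `(F[x])^ℓ` has
rank `ℓ`, a linearly independent generating set) of the `F[x]`-submodule of `(F[x])^ℓ`
corresponding to `CC`, namely `{q | toCode lam m q ∈ CC}`. -/
def IsGPM {F : Type*} [Field F] {ℓ : ℕ} (lam : Fin ℓ → F) (m : Fin ℓ → ℕ)
    (CC : Submodule F (∀ i, Fin (m i) → F))
    (G : Matrix (Fin ℓ) (Fin ℓ) (Polynomial F)) : Prop :=
  LinearIndependent (Polynomial F) (fun i => G i) ∧
  (Submodule.span (Polynomial F) (Set.range (fun i => G i)) :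
      Set (Fin ℓ → Polynomial F)) = {q | toCode lam m q ∈ CC}

/-- Euclidean dual of a blocked code. -/
def dualCodeMT {F : Type*} [Field F] {ℓ : ℕ} {m : Fin ℓ → ℕ}
    (CC : Submodule F (∀ i, Fin (m i) → F)) : Submodule F (∀ i, Fin (m i) → F) where
  carrier := {v | ∀ c ∈ CC, ∑ i, ∑ j, c i j * v i j = 0}
  zero_mem' := by intro c hc; simp
  add_mem' := by
    intro a b ha hb c hc
    simp only [Set.mem_setOf_eq] at *
    simp only [Pi.add_apply, mul_add, Finset.sum_add_distrib, ha c hc, hb c hc, add_zero]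
  smul_mem' := by
    intro r v hv c hc
    simp only [Set.mem_setOf_eq] at *
    have h1 : ∀ i, ∑ j, c i j * (r • v) i j = r * ∑ j, c i j * v i j := by
      intro i
      rw [Finset.mul_sum]
      exact Finset.sum_congr rfl (fun j _ => by simp only [Pi.smul_apply, smul_eq_mul]; ring)
    simp only [h1, ← Finset.mul_sum, hv c hc, mul_zero]

/-- the permutation of a blocked vector reversing the coordinates within each block. -/
def revEach {F : Type*} [Field F] {ℓ : ℕ} {m : Fin ℓ → ℕ} :
    (∀ i, Fin (m i) → F) →ₗ[F] (∀ i, Fin (m i) → F) where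
  toFun v := fun i j => v i j.rev
  map_add' _ _ := rfl
  map_smul' _ _ := rfl

/-!
With `δᵢ = λᵢ⁻¹`, pair polynomial vectors by `⟨p, q⟩ = Σᵢ [x^(mᵢ-1)] (pᵢ qᵢ mod (x^mᵢ - δᵢ))`.
This is the dot product of the codeword of `p` with the blockwise reversal of the codeword of
`q`, so by double duality `q` lies in the module of `L(C)` iff `⟨p, q⟩ = 0` for every `p` in the
row span of `H`. Clearing denominators with `Δ = ∏ᵢ (x^mᵢ - δᵢ)`, this says that `Δ` divides
every entry of `H · diag(Δ / (x^mᵢ - δᵢ)) · q`; as `H · diag(Δ / (x^mᵢ - δᵢ)) · B = Δ · 1`, that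
happens exactly when `q` is in the column span of `B`. A code with a generator matrix is
automatically multi-twisted, since the row span is closed under multiplication by `x`.
-/

namespace Polynomial

variable {R : Type*} [CommRing R]

noncomputable def modTrace (f : R[X]) : R[X] →ₗ[R] R :=
  (lcoeff R (f.natDegree - 1)).comp (modByMonicHom f)

theorem modTrace_apply (f a : R[X]) : modTrace f a = (a %ₘ f).coeff (f.natDegree - 1) := rfl

theorem modTrace_eq_zero_of_dvd {f a : R[X]} (hf : f.Monic) (h : f ∣ a) : modTrace f a = 0 := by
  rw [modTrace_apply, (modByMonic_eq_zero_iff_dvd hf).2 h, coeff_zero]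

theorem dvd_iff_forall_modTrace_mul_eq_zero {f a : R[X]} (hf : f.Monic) :
    f ∣ a ↔ ∀ r, modTrace f (r * a) = 0 := by
  refine ⟨fun h r => modTrace_eq_zero_of_dvd hf (dvd_mul_of_dvd_right h r), fun h => ?_⟩
  nontriviality R
  rw [← modByMonic_eq_zero_iff_dvd hf]
  by_contra ha
  have hf1 : f ≠ 1 := fun h1 => ha (by rw [h1, modByMonic_one])
  have hlt := natDegree_modByMonic_lt a hf hf1
  -- shifting the remainder up to degree `deg f - 1` keeps it reduced and exposes its leading term
  set k := f.natDegree - 1 - (a %ₘ f).natDegree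
  have hdvd : f ∣ X ^ k * a - X ^ k * (a %ₘ f) :=
    ⟨X ^ k * (a /ₘ f), by rw [modByMonic_eq_sub_mul_div a f]; ring⟩
  have hshift : (X ^ k * a) %ₘ f = X ^ k * (a %ₘ f) := by
    rw [modByMonic_eq_of_dvd_sub hf hdvd]
    refine (modByMonic_eq_self_iff hf).2 (degree_lt_degree ?_)
    rw [(monic_X_pow k).natDegree_mul' ha, natDegree_X_pow]
    omega
  have hcoeff := h (X ^ k)
  rw [modTrace_apply, hshift, show f.natDegree - 1 = (a %ₘ f).natDegree + k by omega,
    coeff_X_pow_mul', if_pos (Nat.le_add_left k _), Nat.add_sub_cancel] at hcoeff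
  exact ha (leadingCoeff_eq_zero.1 hcoeff)

theorem modTrace_mul_of_monic {f g : R[X]} (hf : f.Monic) (hg : g.Monic)
    (hf0 : 0 < f.natDegree) (a : R[X]) : modTrace (f * g) (a * g) = modTrace f a := by
  nontriviality R
  have hfg := hf.mul hg
  have hdvd : f * g ∣ a * g - (a %ₘ f) * g :=
    ⟨a /ₘ f, by rw [modByMonic_eq_sub_mul_div a f]; ring⟩
  have hrem : (a * g) %ₘ (f * g) = (a %ₘ f) * g := by
    rw [modByMonic_eq_of_dvd_sub hfg hdvd]
    refine (modByMonic_eq_self_iff hfg).2 ?_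
    rw [hg.degree_mul, hg.degree_mul]
    exact WithBot.add_lt_add_right (degree_ne_bot.2 hg.ne_zero) (degree_modByMonic_lt a hf)
  have hle : (a %ₘ f).natDegree ≤ f.natDegree - 1 := by
    have := natDegree_modByMonic_lt a hf (fun h1 => by simp [h1] at hf0)
    omega
  rw [modTrace_apply, modTrace_apply, hrem, hf.natDegree_mul hg,
    show f.natDegree + g.natDegree - 1 = (f.natDegree - 1) + g.natDegree by omega,
    coeff_mul_add_eq_of_natDegree_le hle le_rfl, hg.coeff_natDegree, mul_one]

theorem sum_modTrace_eq_modTrace_prod {ι : Type*} [Fintype ι] [DecidableEq ι] {f : ι → R[X]}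
    (hf : ∀ i, (f i).Monic) (hf0 : ∀ i, 0 < (f i).natDegree) (a : ι → R[X]) :
    ∑ i, modTrace (f i) (a i) =
      modTrace (∏ i, f i) (∑ i, a i * ∏ j ∈ Finset.univ.erase i, f j) := by
  rw [map_sum]
  refine Finset.sum_congr rfl fun i _ => ?_
  rw [← Finset.mul_prod_erase Finset.univ f (Finset.mem_univ i),
    modTrace_mul_of_monic (hf i) (monic_prod_of_monic _ _ fun j _ => hf j) (hf0 i)]

variable [Nontrivial R]

theorem natDegree_modByMonic_X_pow_sub_C_lt {m : ℕ} (hm : 0 < m) (d : R) (q : R[X]) :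
    (q %ₘ (X ^ m - C d)).natDegree < m := by
  have hf1 : X ^ m - C d ≠ 1 := fun h1 => by
    simpa [natDegree_X_pow_sub_C, hm.ne'] using congrArg natDegree h1
  simpa only [natDegree_X_pow_sub_C] using
    natDegree_modByMonic_lt q (monic_X_pow_sub_C d hm.ne') hf1

theorem coeff_pred_modByMonic_X_pow_sub_C {m : ℕ} (hm : 0 < m) (d : R) {g : R[X]}
    (hg : g.natDegree ≤ 2 * (m - 1)) : (g %ₘ (X ^ m - C d)).coeff (m - 1) = g.coeff (m - 1) := by
  have hf : (X ^ m - C d).Monic := monic_X_pow_sub_C d hm.ne'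
  rcases lt_or_ge g.natDegree m with hlt | hge
  · rw [(modByMonic_eq_self_iff hf).2 (degree_lt_degree (by rwa [natDegree_X_pow_sub_C]))]
  · have hquot : (g /ₘ (X ^ m - C d)).coeff (m - 1) = 0 :=
      coeff_eq_zero_of_natDegree_lt <| by
        rw [natDegree_divByMonic g hf, natDegree_X_pow_sub_C]
        omega
    rw [modByMonic_eq_sub_mul_div g _, coeff_sub, sub_mul, coeff_sub, coeff_X_pow_mul',
      if_neg (by omega), coeff_C_mul, hquot, mul_zero, sub_zero, sub_zero]

theorem modTrace_X_pow_sub_C_mul {m : ℕ} (hm : 0 < m) (d : R) (p q : R[X]) :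
    modTrace (X ^ m - C d) (p * q) =
      ∑ j : Fin m, (p %ₘ (X ^ m - C d)).coeff j * (q %ₘ (X ^ m - C d)).coeff (m - 1 - j) := by
  have hp := natDegree_modByMonic_X_pow_sub_C_lt hm d p
  have hq := natDegree_modByMonic_X_pow_sub_C_lt hm d q
  rw [modTrace_apply, natDegree_X_pow_sub_C, mul_modByMonic,
    coeff_pred_modByMonic_X_pow_sub_C hm d (natDegree_mul_le.trans (by omega)),
    coeff_mul, Finset.Nat.sum_antidiagonal_eq_sum_range_succ_mk, Nat.succ_eq_add_one,
    Nat.sub_add_cancel hm,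
    ← Fin.sum_univ_eq_sum_range (fun j => (p %ₘ _).coeff j * (q %ₘ _).coeff (m - 1 - j))]

theorem coeff_X_mul_modByMonic_X_pow_sub_C {m : ℕ} (hm : 0 < m) (d : R) (q : R[X]) {j : ℕ}
    (hj : j < m) :
    ((X * q) %ₘ (X ^ m - C d)).coeff j =
      if j = 0 then d * (q %ₘ (X ^ m - C d)).coeff (m - 1)
      else (q %ₘ (X ^ m - C d)).coeff (j - 1) := by
  have hf : (X ^ m - C d).Monic := monic_X_pow_sub_C d hm.ne'
  obtain ⟨a, ha⟩ : ∃ a, a = q %ₘ (X ^ m - C d) := ⟨_, rfl⟩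
  have hdeg : a.natDegree < m := ha ▸ natDegree_modByMonic_X_pow_sub_C_lt hm d q
  -- the remainder is `x a - c (xᵐ - d)`, where `c` is the top coefficient of `a`
  have hcoeff_zero :
      (X * a - C (a.coeff (m - 1)) * (X ^ m - C d)).coeff 0 = d * a.coeff (m - 1) := by
    simp [coeff_X_pow, hm.ne, mul_comm]
  have hcoeff_succ : ∀ k, (X * a - C (a.coeff (m - 1)) * (X ^ m - C d)).coeff (k + 1) =
      a.coeff k - if k + 1 = m then a.coeff (m - 1) else 0 := by
    intro k
    simp [coeff_X_pow]
  have hdvd : X ^ m - C d ∣ X * q - (X * a - C (a.coeff (m - 1)) * (X ^ m - C d)) :=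
    ⟨X * (q /ₘ (X ^ m - C d)) + C (a.coeff (m - 1)), by
      linear_combination (-X) * (ha.trans (modByMonic_eq_sub_mul_div q _))⟩
  have hmod : (X * q) %ₘ (X ^ m - C d) = X * a - C (a.coeff (m - 1)) * (X ^ m - C d) := by
    rw [modByMonic_eq_of_dvd_sub hf hdvd]
    refine (modByMonic_eq_self_iff hf).2 ?_
    rw [degree_X_pow_sub_C hm, degree_lt_iff_coeff_zero]
    rintro (_ | k) hk
    · exact absurd hk (by omega)
    · rw [hcoeff_succ]
      split_ifs with hkm
      · rw [show k = m - 1 by omega, sub_self]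
      · rw [coeff_eq_zero_of_natDegree_lt (by exact_mod_cast (by omega : a.natDegree < k)),
          sub_zero]
  rw [hmod, ← ha]
  rcases j with _ | k
  · simpa using hcoeff_zero
  · rw [hcoeff_succ, if_neg (by omega), sub_zero]
    simp

end Polynomial

namespace Matrix

theorem forall_mem_span_dvd_dotProduct_iff {n m R : Type*} [Fintype m] [CommRing R]
    (H : Matrix n m R) (a : R) (w : m → R) :
    (∀ p ∈ Submodule.span R (Set.range H), a ∣ p ⬝ᵥ w) ↔ ∀ k, a ∣ (H *ᵥ w) k := by
  refine ⟨fun h k => h _ (Submodule.subset_span ⟨k, rfl⟩), fun h p hp => ?_⟩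
  induction hp using Submodule.span_induction with
  | mem x hx =>
    obtain ⟨k, rfl⟩ := hx
    exact h k
  | zero => simp
  | add x y _ _ hx hy =>
    rw [add_dotProduct]
    exact dvd_add hx hy
  | smul r x _ hx =>
    rw [smul_dotProduct, smul_eq_mul]
    exact dvd_mul_of_dvd_right hx r

variable {n R : Type*} [Fintype n] [DecidableEq n] [CommRing R]

theorem diagonal_mul_diagonal_prod_erase (f : n → R) :
    diagonal f * diagonal (fun i => ∏ j ∈ Finset.univ.erase i, f j) = (∏ i, f i) • 1 := by
  rw [diagonal_mul_diagonal, smul_one_eq_diagonal]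
  exact congrArg diagonal (funext fun i => Finset.mul_prod_erase _ f (Finset.mem_univ i))

variable [IsDomain R]

theorem mul_left_injective_of_det_ne_zero {H : Matrix n n R} (hH : H.det ≠ 0) :
    Function.Injective fun M : Matrix n n R => M * H := by
  intro M N hMN
  funext i
  refine sub_eq_zero.1 (eq_zero_of_vecMul_eq_zero hH ?_)
  rw [sub_vecMul]
  exact sub_eq_zero.2 (congrFun hMN i)

/-- `H * diag(f)⁻¹ * B = 1` with the denominators cleared. -/
theorem mul_diagonal_prod_erase_mul_of_mul_eq_diagonal {B H : Matrix n n R} {f : n → R}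
    (hBH : B * H = diagonal f) (hf : ∏ i, f i ≠ 0) :
    H * diagonal (fun i => ∏ j ∈ Finset.univ.erase i, f j) * B = (∏ i, f i) • 1 := by
  have hH : H.det ≠ 0 := fun h0 => hf (by rw [← det_diagonal, ← hBH, det_mul, h0, mul_zero])
  refine mul_left_injective_of_det_ne_zero hH ?_
  calc H * diagonal (fun i => ∏ j ∈ Finset.univ.erase i, f j) * B * H
      = H * (diagonal (fun i => ∏ j ∈ Finset.univ.erase i, f j) * diagonal f) := by
        rw [Matrix.mul_assoc, Matrix.mul_assoc, hBH]
    _ = (∏ i, f i) • 1 * H := by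
        rw [← (commute_diagonal _ _).eq, diagonal_mul_diagonal_prod_erase, Matrix.mul_smul,
          Matrix.smul_mul, Matrix.mul_one, Matrix.one_mul]

theorem exists_mulVec_eq_iff_forall_dvd {B H : Matrix n n R} {f : n → R}
    (hBH : B * H = diagonal f) (hf : ∏ i, f i ≠ 0) (q : n → R) :
    (∃ c, B *ᵥ c = q) ↔
      ∀ k, (∏ i, f i) ∣ ((H * diagonal (fun i => ∏ j ∈ Finset.univ.erase i, f j)) *ᵥ q) k := by
  constructor
  · rintro ⟨c, rfl⟩ k
    rw [mulVec_mulVec, mul_diagonal_prod_erase_mul_of_mul_eq_diagonal hBH hf, smul_mulVec,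
      one_mulVec, Pi.smul_apply, smul_eq_mul]
    exact dvd_mul_right _ _
  · intro h
    choose c hc using h
    refine ⟨c, smul_right_injective _ hf ?_⟩
    calc (∏ i, f i) • B *ᵥ c = B *ᵥ ((∏ i, f i) • c) := (mulVec_smul _ _ _).symm
      _ = B *ᵥ ((H * diagonal (fun i => ∏ j ∈ Finset.univ.erase i, f j)) *ᵥ q) :=
        congrArg _ (funext fun k => (hc k).symm)
      _ = (∏ i, f i) • q := by
        rw [mulVec_mulVec, ← Matrix.mul_assoc, hBH, diagonal_mul_diagonal_prod_erase,
          smul_mulVec, one_mulVec]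

end Matrix

section MultiTwisted

variable {F : Type*} [Field F] {ℓ : ℕ}

noncomputable def mtPairing (lam : Fin ℓ → F) (m : Fin ℓ → ℕ) (p q : Fin ℓ → F[X]) : F :=
  ∑ i, modTrace (X ^ m i - C (lam i)) (p i * q i)

variable {m : Fin ℓ → ℕ}

def blockDot : LinearMap.BilinForm F (∀ i, Fin (m i) → F) :=
  LinearMap.mk₂ F (fun c v => ∑ i, ∑ j, c i j * v i j)
    (fun c c' v => by simp only [Pi.add_apply, add_mul, Finset.sum_add_distrib])
    (fun r c v => by simp only [Pi.smul_apply, smul_eq_mul, Finset.mul_sum, mul_assoc])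
    (fun c v v' => by simp only [Pi.add_apply, mul_add, Finset.sum_add_distrib])
    (fun r c v => by simp only [Pi.smul_apply, smul_eq_mul, Finset.mul_sum, mul_left_comm])

theorem blockDot_apply (c v : ∀ i, Fin (m i) → F) : blockDot c v = ∑ i, ∑ j, c i j * v i j :=
  rfl

theorem dualCodeMT_eq_orthogonal (CC : Submodule F (∀ i, Fin (m i) → F)) :
    dualCodeMT CC = blockDot.orthogonal CC :=
  rfl

theorem blockDot_isRefl : (blockDot : LinearMap.BilinForm F (∀ i, Fin (m i) → F)).IsRefl :=
  fun c v h => by simpa only [blockDot_apply, mul_comm] using h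

theorem blockDot_nondegenerate :
    (blockDot : LinearMap.BilinForm F (∀ i, Fin (m i) → F)).Nondegenerate := by
  refine (LinearMap.IsRefl.nondegenerate_iff_separatingLeft
    (B := (blockDot : LinearMap.BilinForm F (∀ i, Fin (m i) → F))) blockDot_isRefl).2 fun v hv => ?_
  ext i j
  have h := hv (Pi.single i (Pi.single j 1))
  rw [blockDot_apply, Fintype.sum_eq_single i fun i' hi' => by simp [hi'],
    Fintype.sum_eq_single j fun j' hj' => by simp [hj']] at h
  simpa using h

theorem dualCodeMT_dualCodeMT (CC : Submodule F (∀ i, Fin (m i) → F)) :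
    dualCodeMT (dualCodeMT CC) = CC := by
  rw [dualCodeMT_eq_orthogonal, dualCodeMT_eq_orthogonal]
  exact LinearMap.BilinForm.orthogonal_orthogonal blockDot_nondegenerate blockDot_isRefl CC

theorem revEach_revEach (v : ∀ i, Fin (m i) → F) : revEach (revEach v) = v :=
  funext fun i => funext fun j => congrArg (v i) (Fin.rev_rev j)

theorem mem_map_revEach_iff {CC : Submodule F (∀ i, Fin (m i) → F)} {v : ∀ i, Fin (m i) → F} :
    v ∈ CC.map revEach ↔ revEach v ∈ CC := by
  constructor
  · rintro ⟨w, hw, rfl⟩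
    rwa [revEach_revEach]
  · exact fun h => ⟨revEach v, h, revEach_revEach v⟩

theorem toCode_surjective (hm : ∀ i, 0 < m i) (lam : Fin ℓ → F) :
    Function.Surjective (toCode lam m) := by
  intro v
  refine ⟨fun i => ((degreeLTEquiv F (m i)).symm (v i) : F[X]), funext fun i => funext fun j => ?_⟩
  have hdeg := mem_degreeLT.1 ((degreeLTEquiv F (m i)).symm (v i)).2
  change ((_ : F[X]) %ₘ _).coeff j = v i j
  rw [(modByMonic_eq_self_iff (monic_X_pow_sub_C _ (hm i).ne')).2
    (by rwa [degree_X_pow_sub_C (hm i)])]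
  exact congrFun ((degreeLTEquiv F (m i)).apply_symm_apply (v i)) j

theorem toCode_X_smul (hm : ∀ i, 0 < m i) (lam : Fin ℓ → F) (p : Fin ℓ → F[X]) :
    toCode lam m ((X : F[X]) • p) = fun i => blockShift (lam i) (toCode lam m p i) :=
  funext fun i => funext fun j => coeff_X_mul_modByMonic_X_pow_sub_C (hm i) (lam i) (p i) j.isLt

theorem IsGPM.isMT (hm : ∀ i, 0 < m i) {lam : Fin ℓ → F} {CC : Submodule F (∀ i, Fin (m i) → F)}
    {G : Matrix (Fin ℓ) (Fin ℓ) F[X]} (hG : IsGPM lam m CC G) : IsMT lam CC := by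
  intro v hv
  obtain ⟨p, rfl⟩ := toCode_surjective hm lam v
  have hp : p ∈ Submodule.span F[X] (Set.range fun i => G i) := by
    rw [← SetLike.mem_coe, hG.2]
    exact hv
  have hXp := Submodule.smul_mem _ X hp
  rw [← SetLike.mem_coe, hG.2] at hXp
  rwa [← toCode_X_smul hm]

theorem mtPairing_eq_blockDot (hm : ∀ i, 0 < m i) (lam : Fin ℓ → F) (p q : Fin ℓ → F[X]) :
    mtPairing lam m p q = blockDot (toCode lam m p) (revEach (toCode lam m q)) := by
  refine Finset.sum_congr rfl fun i _ => ?_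
  rw [modTrace_X_pow_sub_C_mul (hm i)]
  refine Finset.sum_congr rfl fun j _ => ?_
  change _ = toCode lam m p i j * toCode lam m q i j.rev
  rw [toCode, toCode, Fin.val_rev, show m i - (j + 1) = m i - 1 - j by omega]

theorem toCode_mem_map_revEach_iff (hm : ∀ i, 0 < m i) (lam : Fin ℓ → F)
    (CC : Submodule F (∀ i, Fin (m i) → F)) (q : Fin ℓ → F[X]) :
    toCode lam m q ∈ CC.map revEach ↔
      ∀ p, toCode lam m p ∈ dualCodeMT CC → mtPairing lam m p q = 0 := by
  rw [mem_map_revEach_iff]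
  conv_lhs => rw [← dualCodeMT_dualCodeMT CC]
  simp only [mtPairing_eq_blockDot hm]
  exact (toCode_surjective hm lam).forall
    (p := fun v => v ∈ dualCodeMT CC → blockDot v (revEach (toCode lam m q)) = 0)

theorem mtPairing_eq_modTrace (hm : ∀ i, 0 < m i) (lam : Fin ℓ → F) (p q : Fin ℓ → F[X]) :
    mtPairing lam m p q = modTrace (∏ i, (X ^ m i - C (lam i)))
      (p ⬝ᵥ (diagonal (fun i => ∏ j ∈ Finset.univ.erase i, (X ^ m j - C (lam j))) *ᵥ q)) := by
  rw [mtPairing, sum_modTrace_eq_modTrace_prod (fun i => monic_X_pow_sub_C _ (hm i).ne')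
    (fun i => by rw [natDegree_X_pow_sub_C]; exact hm i)]
  congr 1
  simp only [dotProduct, mulVec_diagonal]
  exact Finset.sum_congr rfl fun i _ => by ring

theorem forall_mtPairing_eq_zero_iff (hm : ∀ i, 0 < m i) {lam : Fin ℓ → F}
    {B H : Matrix (Fin ℓ) (Fin ℓ) F[X]} (hBH : B * H = diagonal fun i => X ^ m i - C (lam i))
    (q : Fin ℓ → F[X]) :
    (∀ p ∈ Submodule.span F[X] (Set.range H), mtPairing lam m p q = 0) ↔ ∃ c, B *ᵥ c = q := by
  have hΔ : (∏ i, (X ^ m i - C (lam i))).Monic :=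
    monic_prod_of_monic _ _ fun i _ => monic_X_pow_sub_C _ (hm i).ne'
  rw [Matrix.exists_mulVec_eq_iff_forall_dvd hBH hΔ.ne_zero, ← mulVec_mulVec,
    ← Matrix.forall_mem_span_dvd_dotProduct_iff]
  simp only [mtPairing_eq_modTrace hm]
  constructor
  · intro h p hp
    refine (dvd_iff_forall_modTrace_mul_eq_zero hΔ).2 fun r => ?_
    rw [← smul_eq_mul, ← smul_dotProduct]
    exact h _ (Submodule.smul_mem _ r hp)
  · exact fun h p hp => modTrace_eq_zero_of_dvd hΔ (h p hp)

end MultiTwisted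

theorem stmt6_general {F : Type*} [Field F] {ℓ : ℕ} {m : Fin ℓ → ℕ}
    (hm : ∀ i, 0 < m i) {lam : Fin ℓ → F}
    (CC : Submodule F (∀ i, Fin (m i) → F))
    (H B : Matrix (Fin ℓ) (Fin ℓ) (Polynomial F))
    (hH : IsGPM (fun i => (lam i)⁻¹) m (dualCodeMT CC) H)
    (hB : B * H = Matrix.diagonal (fun i => X ^ (m i) - Polynomial.C ((lam i)⁻¹))) :
    IsMT (fun i => (lam i)⁻¹) (CC.map revEach) ∧
    IsGPM (fun i => (lam i)⁻¹) m (CC.map revEach) B.transpose := by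
  have hdetB : B.det ≠ 0 := fun h0 =>
    (monic_prod_of_monic _ _ fun i _ => monic_X_pow_sub_C ((lam i)⁻¹) (hm i).ne').ne_zero
      (by rw [← det_diagonal, ← hB, det_mul, h0, zero_mul])
  have hGPM : IsGPM (fun i => (lam i)⁻¹) m (CC.map revEach) B.transpose := by
    refine ⟨linearIndependent_rows_of_det_ne_zero (by rwa [det_transpose]), Set.ext fun q => ?_⟩
    change q ∈ Submodule.span _ (Set.range B.col) ↔ toCode _ m q ∈ CC.map revEach
    simp only [← range_mulVecLin, LinearMap.mem_range, mulVecLin_apply]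
    rw [toCode_mem_map_revEach_iff hm, ← forall_mtPairing_eq_zero_iff hm hB]
    exact forall_congr' fun p => imp_congr_left (Set.ext_iff.1 hH.2 p)
  exact ⟨hGPM.isMT hm, hGPM⟩

/-- Let `C` be a Λ-MT code with block lengths `(m₁,…,m_ℓ)` and set
`Δ = Λ⁻¹`.  Then `L(C)` (reverse the coordinates within each block of every codeword) is a
Δ-MT code with the same block lengths, and `Bᵀ` is a GPM of `L(C)`, where `H` is a GPM of
the Euclidean dual `C^⊥` and `B` satisfies `B * H = diag(x^{mᵢ} - λᵢ⁻¹)`. -/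
theorem stmt6 {F : Type*} [Field F] [Fintype F] {ℓ : ℕ} {m : Fin ℓ → ℕ}
    (hm : ∀ i, 0 < m i) {lam : Fin ℓ → F} (hlam : ∀ i, lam i ≠ 0)
    (CC : Submodule F (∀ i, Fin (m i) → F)) (hC : IsMT lam CC)
    (H B : Matrix (Fin ℓ) (Fin ℓ) (Polynomial F))
    (hH : IsGPM (fun i => (lam i)⁻¹) m (dualCodeMT CC) H)
    (hB : B * H = Matrix.diagonal (fun i => X ^ (m i) - Polynomial.C ((lam i)⁻¹))) :
    IsMT (fun i => (lam i)⁻¹) (CC.map revEach) ∧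
    IsGPM (fun i => (lam i)⁻¹) m (CC.map revEach) B.transpose :=
  stmt6_general hm CC H B hH hB
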